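/- arXiv:1309.6141 — 2 statements merged into one kernel-verified Lean document; each statement's English description precedes it below -/
import Mathlib

section
/- Let σ be a random time and let T be a stopping time for the right-continuous progressively enlarged filtration (G_t^+). Then there exists an (F_t)-stopping time S such that T ∧ σ = S ∧ σ. -/
/-!
On `{σ > s}` every generator `{σ > r}`, `r ≤ s`, is the whole space, so each set of
`ℱ s ⊔ σ({σ > r} : r ≤ s)` coincides there with a set of `ℱ s`. Letting `s ↓ t` along a sequence,
the `liminf` of these sets lies in `⋂_{s>t} ℱ s = ℱ t`, so each `𝒢⁺ t`-set coincides on `{σ > t}`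
with an `ℱ t`-set `B t`. With `B t` chosen for `{T ≤ t}`, the début `S = inf {q ∈ ℚ₊ | ω ∈ B q}` is
an `ℱ`-stopping time and `S < r ↔ T < r` for every `r < σ`, whence `T ∧ σ = S ∧ σ`.
-/

open MeasureTheory

section

open Filter Filtration Set
open scoped NNReal ENNReal

variable {Ω : Type*}

lemma exists_inter_eq_of_measurableSet_sup_generateFrom {m₀ : MeasurableSpace Ω}
    {C : Set (Set Ω)} {D A : Set Ω} (hC : ∀ c ∈ C, D ⊆ c)
    (hA : MeasurableSet[m₀ ⊔ MeasurableSpace.generateFrom C] A) :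
    ∃ B, MeasurableSet[m₀] B ∧ D ∩ A = D ∩ B := by
  have hle : m₀ ⊔ MeasurableSpace.generateFrom C ≤ (m₀.comap ((↑) : D → Ω)).map (↑) := by
    refine sup_le MeasurableSpace.le_map_comap (MeasurableSpace.generateFrom_le fun c hc => ?_)
    refine MeasurableSpace.measurableSet_comap.mpr ⟨univ, .univ, ?_⟩
    rw [preimage_univ, eq_comm, preimage_eq_univ_iff, Subtype.range_coe]
    exact hC c hc
  obtain ⟨B, hB, hBA⟩ := hle A hA
  exact ⟨B, hB, (Subtype.preimage_coe_eq_preimage_coe_iff.mp hBA).symm⟩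

lemma exists_inter_eq_of_forall_gt {m : MeasurableSpace Ω} {ℱ : Filtration ℝ≥0 m}
    [ℱ.IsRightContinuous] {σ : Ω → ℝ≥0∞} {A : Set Ω} {t : ℝ≥0}
    (hA : ∀ s, t < s → ∃ B, MeasurableSet[ℱ s] B ∧
      {ω | (s : ℝ≥0∞) < σ ω} ∩ A = {ω | (s : ℝ≥0∞) < σ ω} ∩ B) :
    ∃ B, MeasurableSet[ℱ t] B ∧ {ω | (t : ℝ≥0∞) < σ ω} ∩ A = {ω | (t : ℝ≥0∞) < σ ω} ∩ B := by
  obtain ⟨u, -, htu, hu⟩ := exists_seq_strictAnti_tendsto t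
  choose B hB hAB using fun n => hA (u n) (htu n)
  refine ⟨liminf B atTop, IsRightContinuous.measurableSet ?_, ?_⟩
  · rw [rightCont_eq]
    simp only [MeasurableSpace.measurableSet_iInf]
    intro s hts
    obtain ⟨N, hN⟩ := eventually_atTop.mp (hu.eventually_lt_const hts)
    rw [← liminf_nat_add B N]
    exact @MeasurableSet.measurableSet_liminf _ (ℱ s) _ fun n =>
      ℱ.mono (hN (n + N) (by omega)).le _ (hB _)
  · ext ω
    simp only [mem_inter_iff, mem_ofPred_eq, mem_liminf_iff_eventually_mem]
    refine and_congr_right fun hω => ?_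
    have hAB_ω : ∀ᶠ n in atTop, (ω ∈ A ↔ ω ∈ B n) :=
      (((ENNReal.continuous_coe.tendsto t).comp hu).eventually_lt_const hω).mono
        fun n (hn : (u n : ℝ≥0∞) < σ ω) => by simpa [hn] using congrArg (ω ∈ ·) (hAB n)
    rw [← eventually_const (f := (atTop : Filter ℕ)) (p := ω ∈ A)]
    exact eventually_congr hAB_ω

lemma isStoppingTime_ite_mem {ι : Type*} [Preorder ι] {m : MeasurableSpace Ω}
    {f : Filtration ι m} {s : Set Ω} [DecidablePred (· ∈ s)] {i : ι}
    (hs : MeasurableSet[f i] s) :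
    IsStoppingTime f fun ω => if ω ∈ s then (i : WithTop ι) else ⊤ := by
  intro j
  by_cases hij : i ≤ j
  · convert f.mono hij _ hs using 1
    ext ω
    by_cases hω : ω ∈ s <;> simp [hω, hij]
  · convert MeasurableSet.empty
    ext ω
    by_cases hω : ω ∈ s <;> simp [hω, hij]

lemma ENNReal.min_eq_min_of_forall_lt_iff {x y c : ℝ≥0∞}
    (h : ∀ r : ℝ≥0, (r : ℝ≥0∞) < c → (x < r ↔ y < r)) : min x c = min y c := by
  have key : ∀ {x y : ℝ≥0∞}, (∀ r : ℝ≥0, (r : ℝ≥0∞) < c → (x < r ↔ y < r)) →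
      min x c ≤ min y c := by
    intro x y h
    refine ENNReal.le_of_forall_nnreal_lt fun r hr => ?_
    rw [lt_min_iff] at hr
    exact le_min (not_lt.mp fun hyr => lt_asymm hr.1 ((h r hr.2).mpr hyr)) hr.2.le
  exact le_antisymm (key h) (key fun r hr => (h r hr).symm)

lemma exists_isStoppingTime_min_eq {m : MeasurableSpace Ω} {ℱ : Filtration ℝ≥0 m}
    [ℱ.IsRightContinuous] {σ T : Ω → ℝ≥0∞} {B : ℝ≥0 → Set Ω}
    (hB : ∀ r, MeasurableSet[ℱ r] (B r))
    (hBT : ∀ r : ℝ≥0, {ω | (r : ℝ≥0∞) < σ ω} ∩ {ω | T ω ≤ r} = {ω | (r : ℝ≥0∞) < σ ω} ∩ B r) :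
    ∃ S : Ω → ℝ≥0∞, IsStoppingTime ℱ S ∧ ∀ ω, min (T ω) (σ ω) = min (S ω) (σ ω) := by
  classical
  let τ : ℚ → Ω → ℝ≥0∞ := fun q ω =>
    if ω ∈ B (Real.toNNReal q) then (Real.toNNReal q : ℝ≥0∞) else ⊤
  refine ⟨fun ω => ⨅ q, τ q ω, IsStoppingTime.iInf fun q => isStoppingTime_ite_mem (hB _),
    fun ω => ENNReal.min_eq_min_of_forall_lt_iff fun r hr => ?_⟩
  have hmem : ∀ q : ℚ, (Real.toNNReal q : ℝ≥0∞) < r →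
      (ω ∈ B (Real.toNNReal q) ↔ T ω ≤ Real.toNNReal q) := fun q hq => by
    simpa [hq.trans hr] using (congrArg (ω ∈ ·) (hBT (Real.toNNReal q))).symm
  simp only [iInf_lt_iff, τ]
  constructor
  · intro hT
    obtain ⟨q, -, hTq, hqr⟩ := ENNReal.lt_iff_exists_rat_btwn.mp hT
    exact ⟨q, by rwa [if_pos ((hmem q hqr).mpr hTq.le)]⟩
  · rintro ⟨q, hq⟩
    split_ifs at hq with hωB
    · exact ((hmem q hq).mp hωB).trans_lt hq
    · exact absurd hq not_top_lt

end

theorem stmt_2_general {Ω : Type*} {m : MeasurableSpace Ω}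
    (ℱ : Filtration NNReal m)
    (hrc : ∀ t : NNReal,
      (ℱ t : MeasurableSpace Ω) = ⨅ (s : NNReal) (_ : t < s), (ℱ s : MeasurableSpace Ω))
    (σ : Ω → ENNReal)
    (Gplus : NNReal → MeasurableSpace Ω)
    (hGplus : ∀ t : NNReal, Gplus t = ⨅ (s : NNReal) (_ : t < s),
      ((ℱ s : MeasurableSpace Ω) ⊔ MeasurableSpace.generateFrom
        {A : Set Ω | ∃ r : NNReal, r ≤ s ∧ A = {ω | (r : ENNReal) < σ ω}}))
    (T : Ω → ENNReal)
    (hT : ∀ t : NNReal, MeasurableSet[Gplus t] {ω | T ω ≤ (t : ENNReal)}) :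
    ∃ S : Ω → ENNReal,
      (∀ t : NNReal, MeasurableSet[ℱ t] {ω | S ω ≤ (t : ENNReal)}) ∧
      ∀ ω, min (T ω) (σ ω) = min (S ω) (σ ω) := by
  have : ℱ.IsRightContinuous := ⟨fun t => (Filtration.rightCont_eq ℱ t).trans_le (hrc t).ge⟩
  have hB : ∀ t : NNReal, ∃ B, MeasurableSet[ℱ t] B ∧
      {ω | (t : ENNReal) < σ ω} ∩ {ω | T ω ≤ t} = {ω | (t : ENNReal) < σ ω} ∩ B := by
    intro t
    refine exists_inter_eq_of_forall_gt fun s hts => ?_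
    have hTt := hT t
    rw [hGplus t, MeasurableSpace.measurableSet_iInf] at hTt
    refine exists_inter_eq_of_measurableSet_sup_generateFrom ?_
      (MeasurableSpace.measurableSet_iInf.mp (hTt s) hts)
    rintro _ ⟨r, hrs, rfl⟩ ω hω
    exact (ENNReal.coe_le_coe.mpr hrs).trans_lt hω
  choose B hBm hBT using hB
  exact exists_isStoppingTime_min_eq hBm hBT

/-- Let `(ℱ t)` be a right-continuous filtration, `σ` a random time, and
`T` a stopping time for the right-continuous progressively enlarged filtration
`𝒢⁺ t = ⋂_{s>t} (ℱ s ⊔ σ({σ > r} : r ≤ s))`. Then there exists an `(ℱ t)`-stopping time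
`S` such that `T ∧ σ = S ∧ σ`. -/
theorem stmt_2 {Ω : Type*} {m : MeasurableSpace Ω}
    (P : Measure Ω) [IsProbabilityMeasure P]
    (ℱ : Filtration NNReal m)
    (hrc : ∀ t : NNReal,
      (ℱ t : MeasurableSpace Ω) = ⨅ (s : NNReal) (_ : t < s), (ℱ s : MeasurableSpace Ω))
    (σ : Ω → ENNReal) (hσ : Measurable σ)
    (Gplus : NNReal → MeasurableSpace Ω)
    (hGplus : ∀ t : NNReal, Gplus t = ⨅ (s : NNReal) (_ : t < s),
      ((ℱ s : MeasurableSpace Ω) ⊔ MeasurableSpace.generateFrom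
        {A : Set Ω | ∃ r : NNReal, r ≤ s ∧ A = {ω | (r : ENNReal) < σ ω}}))
    (T : Ω → ENNReal)
    (hT : ∀ t : NNReal, MeasurableSet[Gplus t] {ω | T ω ≤ (t : ENNReal)}) :
    ∃ S : Ω → ENNReal,
      (∀ t : NNReal, MeasurableSet[ℱ t] {ω | S ω ≤ (t : ENNReal)}) ∧
      ∀ ω, min (T ω) (σ ω) = min (S ω) (σ ω) :=
  stmt_2_general ℱ hrc σ Gplus hGplus T hT
end

section
/- Assume additionally that A is (F_t)-adapted, that A_∞ = 1 P-a.s., and the conditional dual projection property: for every bounded measurable f : ℝ → ℝ and every t ≥ 0, E^P[f(A_σ)·1_{σ>t} | F_t] = E^P[∫_{(t,∞)} f(A_u) dA_u | F_t] P-a.s. Then for every bounded measurable f : ℝ → ℝ and every t ≥ 0, P-almost surely E^P[f(A_σ)·1_{σ>t} | F_t] = ∫_{A_t}^{1} f(x) dx (Lebesgue integral). -/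
/-!
Almost surely the path `u ↦ A u ω` is continuous, nondecreasing, starts at `0` and tends to `1`,
and `ν ω` is its Lebesgue–Stieltjes measure. Pushing `ν ω` restricted to `(t, ∞)` forward by
the path gives Lebesgue measure on `(A t ω, 1]`: for `A t ω ≤ x < 1` the preimage of `(-∞, x]`
is `[0, s]` with `s` the last time the path equals `x`. Hence
`∫_{(t,∞)} f(A_u) dA_u = ∫_{A_t}^1 f`, a bounded `ℱ t`-measurable function of `A t`, which is
therefore its own conditional expectation, and the dual projection property concludes.
-/

open MeasureTheory Filter Set
open scoped NNReal ENNReal Topology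

theorem Monotone.exists_preimage_Iic_eq_Iic {α β : Type*} [ConditionallyCompleteLinearOrder α]
    [TopologicalSpace α] [OrderTopology α] [DenselyOrdered α] [LinearOrder β] [TopologicalSpace β]
    [OrderClosedTopology β] {φ : α → β} (hmono : Monotone φ) (hcont : Continuous φ) {t u : α}
    {x : β} (htx : φ t ≤ x) (hxu : x < φ u) : ∃ s, t ≤ s ∧ φ s = x ∧ φ ⁻¹' Iic x = Iic s := by
  obtain ⟨s', -, hs'⟩ : ∃ s' ∈ Icc t u, φ s' = x :=
    intermediate_value_Icc (hmono.reflect_lt (htx.trans_lt hxu)).le hcont.continuousOn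
      ⟨htx, hxu.le⟩
  have hbdd : BddAbove (φ ⁻¹' Iic x) := ⟨u, fun v hv => (hmono.reflect_lt (hv.trans_lt hxu)).le⟩
  have hmem : sSup (φ ⁻¹' Iic x) ∈ φ ⁻¹' Iic x :=
    (isClosed_Iic.preimage hcont).csSup_mem ⟨t, htx⟩ hbdd
  refine ⟨_, le_csSup hbdd htx, le_antisymm hmem (hs'.ge.trans (hmono (le_csSup hbdd hs'.le))), ?_⟩
  ext v
  exact ⟨fun hv => le_csSup hbdd hv, fun hv => (hmono hv).trans hmem⟩

section Pushforward

variable {φ : ℝ≥0 → ℝ} {ν : Measure ℝ≥0}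

theorem measure_Iic_eq_ofReal (hφ0 : φ 0 = 0) (hν0 : ν {0} = 0)
    (hIoc : ∀ a b, a ≤ b → ν (Ioc a b) = ENNReal.ofReal (φ b - φ a)) (s : ℝ≥0) :
    ν (Iic s) = ENNReal.ofReal (φ s) := by
  rw [← Icc_bot, ← measure_sdiff_null hν0, bot_eq_zero, Icc_sdiff_left, hIoc 0 s zero_le,
    hφ0, sub_zero]

theorem measure_Ioi_eq_ofReal [IsProbabilityMeasure ν] (hmono : Monotone φ) (hφ0 : φ 0 = 0)
    (hν0 : ν {0} = 0) (hIoc : ∀ a b, a ≤ b → ν (Ioc a b) = ENNReal.ofReal (φ b - φ a))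
    (s : ℝ≥0) : ν (Ioi s) = ENNReal.ofReal (1 - φ s) := by
  rw [← compl_Iic, prob_compl_eq_one_sub measurableSet_Iic, measure_Iic_eq_ofReal hφ0 hν0 hIoc,
    ← ENNReal.ofReal_one, ← ENNReal.ofReal_sub _ (hφ0 ▸ hmono zero_le)]

theorem map_restrict_Ioi_eq_volume [IsProbabilityMeasure ν] (hmono : Monotone φ)
    (hcont : Continuous φ) (hφ0 : φ 0 = 0) (hlim : Tendsto φ atTop (𝓝 1)) (hν0 : ν {0} = 0)
    (hIoc : ∀ a b, a ≤ b → ν (Ioc a b) = ENNReal.ofReal (φ b - φ a)) (t : ℝ≥0) :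
    (ν.restrict (Ioi t)).map φ = volume.restrict (Ioc (φ t) 1) := by
  refine Measure.ext_of_Iic _ _ fun x => ?_
  rw [Measure.map_apply hcont.measurable measurableSet_Iic,
    Measure.restrict_apply (hcont.measurable measurableSet_Iic),
    Measure.restrict_apply measurableSet_Iic, inter_comm (Iic x), Ioc_inter_Iic, Real.volume_Ioc]
  rcases lt_or_ge x (φ t) with hxt | htx
  · have hempty : φ ⁻¹' Iic x ∩ Ioi t = ∅ :=
      eq_empty_of_forall_notMem fun u ⟨hux, htu⟩ => (hxt.trans_le (hmono htu.le)).not_ge hux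
    rw [hempty, measure_empty,
      ENNReal.ofReal_eq_zero.2 (sub_nonpos.2 (inf_le_right.trans hxt.le))]
  rcases le_or_gt 1 x with hx1 | hx1
  · rw [preimage_eq_univ_iff.2 fun _ ⟨u, hu⟩ => hu ▸ (hmono.ge_of_tendsto hlim u).trans hx1,
      univ_inter, measure_Ioi_eq_ofReal hmono hφ0 hν0 hIoc, inf_eq_left.2 hx1]
  · obtain ⟨u, hu⟩ := (hlim.eventually (eventually_gt_nhds hx1)).exists
    obtain ⟨s, hts, rfl, hpre⟩ := hmono.exists_preimage_Iic_eq_Iic hcont htx hu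
    rw [hpre, Iic_inter_Ioi, hIoc t s hts, inf_eq_right.2 hx1.le]

theorem setIntegral_Ioi_comp_eq_intervalIntegral {E : Type*} [NormedAddCommGroup E]
    [NormedSpace ℝ E] [IsProbabilityMeasure ν] (hmono : Monotone φ) (hcont : Continuous φ)
    (hφ0 : φ 0 = 0) (hlim : Tendsto φ atTop (𝓝 1)) (hν0 : ν {0} = 0)
    (hIoc : ∀ a b, a ≤ b → ν (Ioc a b) = ENNReal.ofReal (φ b - φ a)) (t : ℝ≥0) {f : ℝ → E}
    (hf : StronglyMeasurable f) :
    ∫ u in Ioi t, f (φ u) ∂ν = ∫ x in φ t..1, f x := by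
  rw [intervalIntegral.integral_of_le (hmono.ge_of_tendsto hlim t),
    ← map_restrict_Ioi_eq_volume hmono hcont hφ0 hlim hν0 hIoc,
    integral_map hcont.aemeasurable hf.aestronglyMeasurable]

end Pushforward

theorem continuous_intervalIntegral_left_of_abs_le {f : ℝ → ℝ} (hf : Measurable f) {C : ℝ}
    (hC : ∀ x, |f x| ≤ C) (b : ℝ) : Continuous fun a => ∫ x in a..b, f x := by
  have hf_int (a b : ℝ) : IntervalIntegrable f volume a b :=
    intervalIntegrable_const.mono_fun' hf.aestronglyMeasurable (ae_of_all _ hC)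
  simp_rw [intervalIntegral.integral_symm b]
  exact (intervalIntegral.continuous_primitive hf_int b).neg

theorem stmt_6_general {Ω : Type*} {m : MeasurableSpace Ω}
    (P : Measure Ω) [IsProbabilityMeasure P]
    (ℱ : Filtration NNReal m)
    (σ : Ω → NNReal)
    (A : NNReal → Ω → ℝ)
    (hAadapted : ∀ t : NNReal, StronglyMeasurable[ℱ t] (A t))
    (Atop : Ω → ℝ)
    (hpath : ∀ᵐ ω ∂P, Monotone (fun t => A t ω) ∧ Continuous (fun t => A t ω) ∧
      A 0 ω = 0 ∧ Tendsto (fun t => A t ω) atTop (nhds (Atop ω)))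
    (hAtop : ∀ᵐ ω ∂P, Atop ω = 1)
    (ν : Ω → Measure NNReal)
    (hν : ∀ᵐ ω ∂P, (∀ a b : NNReal, a ≤ b →
        ν ω (Set.Ioc a b) = ENNReal.ofReal (A b ω - A a ω)) ∧
      ν ω {0} = 0 ∧ ν ω Set.univ = ENNReal.ofReal (Atop ω))
    (hdual : ∀ f : ℝ → ℝ, Measurable f → (∃ C, ∀ x, |f x| ≤ C) → ∀ t : NNReal,
      P[fun ω => f (A (σ ω) ω) * Set.indicator {ω' | t < σ ω'} (fun _ => (1 : ℝ)) ω | ℱ t]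
        =ᵐ[P] P[fun ω => ∫ u in Set.Ioi t, f (A u ω) ∂(ν ω) | ℱ t]) :
    ∀ f : ℝ → ℝ, Measurable f → (∃ C, ∀ x, |f x| ≤ C) → ∀ t : NNReal,
      P[fun ω => f (A (σ ω) ω) * Set.indicator {ω' | t < σ ω'} (fun _ => (1 : ℝ)) ω | ℱ t]
        =ᵐ[P] fun ω => ∫ x in (A t ω)..1, f x := by
  rintro f hf ⟨C, hC⟩ t
  set g : Ω → ℝ := fun ω => ∫ x in (A t ω)..1, f x
  have hpath_integral : (fun ω => ∫ u in Ioi t, f (A u ω) ∂(ν ω)) =ᵐ[P] g := by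
    filter_upwards [hpath, hAtop, hν] with ω ⟨hmono, hcont, hA0, hlim⟩ hω ⟨hIoc, hν0, hνuniv⟩
    rw [hω] at hlim hνuniv
    have : IsProbabilityMeasure (ν ω) := ⟨by rw [hνuniv, ENNReal.ofReal_one]⟩
    exact setIntegral_Ioi_comp_eq_intervalIntegral hmono hcont hA0 hlim hν0 hIoc t
      hf.stronglyMeasurable
  have hg_meas : StronglyMeasurable[ℱ t] g :=
    (continuous_intervalIntegral_left_of_abs_le hf hC 1).comp_stronglyMeasurable (hAadapted t)
  have hg_int : Integrable g P := by
    refine .of_bound (hg_meas.mono (ℱ.le t)).aestronglyMeasurable C ?_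
    filter_upwards [hpath, hAtop] with ω ⟨hmono, _, hA0, hlim⟩ hω
    rw [hω] at hlim
    have hA_nonneg : 0 ≤ A t ω := hA0 ▸ hmono zero_le
    have hA_le_one : A t ω ≤ 1 := hmono.ge_of_tendsto hlim t
    calc ‖g ω‖ ≤ C * |1 - A t ω| :=
          intervalIntegral.norm_integral_le_of_norm_le_const fun x _ => hC x
      _ ≤ C * 1 := by
          gcongr
          · exact (abs_nonneg _).trans (hC 0)
          · exact abs_le.2 ⟨by linarith, by linarith⟩
      _ = C := mul_one C
  have hg_condExp : P[g | ℱ t] = g := condExp_of_stronglyMeasurable (ℱ.le t) hg_meas hg_int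
  exact hg_condExp ▸ (hdual f hf ⟨C, hC⟩ t).trans (condExp_congr_ae hpath_integral)

/-- In the setting of Statement 4, assume additionally that `A` is
`(ℱ t)`-adapted, that `A_∞ = 1` `P`-a.s., and the conditional dual projection property:
for every bounded measurable `f` and every `t ≥ 0`,
`E[f(A_σ)·1_{σ>t} | ℱ t] = E[∫_{(t,∞)} f(A_u) dA_u | ℱ t]` `P`-a.s.
Then for every bounded measurable `f` and every `t ≥ 0`, `P`-almost surely
`E[f(A_σ)·1_{σ>t} | ℱ t] = ∫_{A_t}^{1} f(x) dx` (Lebesgue integral). -/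
theorem stmt_6 {Ω : Type*} {m : MeasurableSpace Ω}
    (P : Measure Ω) [IsProbabilityMeasure P]
    (ℱ : Filtration NNReal m)
    (σ : Ω → NNReal) (hσ : Measurable σ)
    (A : NNReal → Ω → ℝ)
    (hAmeas : Measurable fun p : NNReal × Ω => A p.1 p.2)
    (hAadapted : ∀ t : NNReal, StronglyMeasurable[ℱ t] (A t))
    (Atop : Ω → ℝ)
    (hpath : ∀ᵐ ω ∂P, Monotone (fun t => A t ω) ∧ Continuous (fun t => A t ω) ∧
      A 0 ω = 0 ∧ Tendsto (fun t => A t ω) atTop (nhds (Atop ω)))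
    (hAtop : ∀ᵐ ω ∂P, Atop ω = 1)
    (ν : Ω → Measure NNReal)
    (hν : ∀ᵐ ω ∂P, (∀ a b : NNReal, a ≤ b →
        ν ω (Set.Ioc a b) = ENNReal.ofReal (A b ω - A a ω)) ∧
      ν ω {0} = 0 ∧ ν ω Set.univ = ENNReal.ofReal (Atop ω))
    (hdual : ∀ f : ℝ → ℝ, Measurable f → (∃ C, ∀ x, |f x| ≤ C) → ∀ t : NNReal,
      P[fun ω => f (A (σ ω) ω) * Set.indicator {ω' | t < σ ω'} (fun _ => (1 : ℝ)) ω | ℱ t]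
        =ᵐ[P] P[fun ω => ∫ u in Set.Ioi t, f (A u ω) ∂(ν ω) | ℱ t]) :
    ∀ f : ℝ → ℝ, Measurable f → (∃ C, ∀ x, |f x| ≤ C) → ∀ t : NNReal,
      P[fun ω => f (A (σ ω) ω) * Set.indicator {ω' | t < σ ω'} (fun _ => (1 : ℝ)) ω | ℱ t]
        =ᵐ[P] fun ω => ∫ x in (A t ω)..1, f x :=
  stmt_6_general P ℱ σ A hAadapted Atop hpath hAtop ν hν hdual
end
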